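/- arXiv:2002.07955 — 3 statements merged into one kernel-verified Lean document; each statement's English description precedes it below -/
import Mathlib

section
/- Let n ≥ 1 and let L ⊂ ℝⁿ be the set of all integer combinations of a basis b₁,…,bₙ of ℝⁿ (a full-rank lattice). Let q ≥ 1 be an integer, s > 0 a real number, and ε ∈ (0,1). Assume the Gaussian mass ρ_s is summable on L, and that for every v ∈ L the coset mass satisfies ((1−ε)/(1+ε))·ρ_s(qL) ≤ ρ_s(qL + v) ≤ ρ_s(qL). Then the probability distribution on the quotient group L/qL (which has exactly qⁿ elements) assigning to the coset of v the probability ρ_s(qL+v)/ρ_s(L) is within statistical distance 2ε/(1+ε) of the uniform distribution on L/qL; that is, (1/2)·Σ_{c ∈ L/qL} | ρ_s(c)/ρ_s(L) − q^{−n} | ≤ 2ε/(1+ε), where ρ_s(c) denotes the Gaussian mass of the coset c. -/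
/-!
Every coset of `qL` in `L` has Gaussian mass in `[α M, M]`, where `M = ρ_s(qL)` and
`α = (1 - ε)/(1 + ε)`. Since `L/qL ≅ (ℤ/qℤ)ⁿ` has `N = qⁿ` elements, `ρ_s(L) ≤ N M`, so every
coset has probability at least `α/N`. For a distribution `p` on `N` points whose total is `1`,
the statistical distance to uniform equals the total deficit `∑ (1/N - p)⁺`, which is at most
`N · (1 - α)/N = 1 - α = 2ε/(1 + ε)`.
-/

noncomputable def gaussMass {n : ℕ} (s : ℝ) (S : Set (EuclideanSpace ℝ (Fin n))) : ℝ :=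
  ∑' x : S, Real.exp (-Real.pi * ‖(x : EuclideanSpace ℝ (Fin n))‖ ^ 2 / s ^ 2)

open Finset

theorem Finset.sum_abs_eq_two_nsmul_sum_negPart {ι α : Type*} [AddCommGroup α] [LinearOrder α]
    [IsOrderedAddMonoid α] (s : Finset ι) (x : ι → α) (h : ∑ i ∈ s, x i = 0) :
    ∑ i ∈ s, |x i| = 2 • ∑ i ∈ s, (x i)⁻ := by
  have hpos_eq_neg : ∑ i ∈ s, (x i)⁺ = ∑ i ∈ s, (x i)⁻ := by
    rw [← sub_eq_zero, ← sum_sub_distrib]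
    simp only [posPart_sub_negPart, h]
  simp only [← posPart_add_negPart, sum_add_distrib, hpos_eq_neg, two_nsmul]

theorem half_sum_abs_sub_inv_card_le {ι : Type*} [Fintype ι] (p : ι → ℝ) (hp : ∑ i, p i = 1)
    (δ : ℝ) (hδ : ∀ i, (1 - δ) / Fintype.card ι ≤ p i) :
    (1 / 2) * ∑ i, |p i - (Fintype.card ι : ℝ)⁻¹| ≤ δ := by
  have hN : (0 : ℝ) < Fintype.card ι := by
    have : Nonempty ι := by
      by_contra h
      simp [not_nonempty_iff.mp h] at hp
    exact_mod_cast Fintype.card_pos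
  have hδ0 : 0 ≤ δ := by
    have := sum_le_sum fun i (_ : i ∈ univ) => hδ i
    rw [hp, sum_const, card_univ, nsmul_eq_mul, mul_div_cancel₀ _ hN.ne'] at this
    linarith
  have hcentered : ∑ i, (p i - (Fintype.card ι : ℝ)⁻¹) = 0 := by
    simp [sum_sub_distrib, hp, hN.ne']
  rw [sum_abs_eq_two_nsmul_sum_negPart _ _ hcentered, two_nsmul]
  calc (1 / 2) * (∑ i, (p i - (Fintype.card ι : ℝ)⁻¹)⁻ + ∑ i, (p i - (Fintype.card ι : ℝ)⁻¹)⁻)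
      = ∑ i, (p i - (Fintype.card ι : ℝ)⁻¹)⁻ := by ring
    _ ≤ ∑ _i : ι, δ / Fintype.card ι := by
        refine sum_le_sum fun i _ => ?_
        rw [negPart_def]
        refine sup_le ?_ (by positivity)
        have := hδ i
        rw [sub_div, one_div] at this
        linarith
    _ = δ := by simp [mul_div_cancel₀ _ hN.ne']

theorem le_div_sum_of_bounds {ι : Type*} [Fintype ι] (f : ι → ℝ) {α M : ℝ} (hα : 0 ≤ α)
    (hlower : ∀ i, α * M ≤ f i) (hupper : ∀ i, f i ≤ M) (hpos : 0 < ∑ i, f i) (i : ι) :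
    α / Fintype.card ι ≤ f i / ∑ j, f j := by
  have htotal : ∑ j, f j ≤ Fintype.card ι * M := by
    simpa using sum_le_sum fun j (_ : j ∈ univ) => hupper j
  have hM : 0 < M := pos_of_mul_pos_right (hpos.trans_le htotal) (Nat.cast_nonneg _)
  have hcard : (0 : ℝ) < Fintype.card ι := Nat.cast_pos.mpr (Fintype.card_pos_iff.mpr ⟨i⟩)
  calc α / Fintype.card ι = α * M / (Fintype.card ι * M) := by field_simp
    _ ≤ f i / ∑ j, f j :=
      div_le_div₀ ((mul_nonneg hα hM.le).trans (hlower i)) (hlower i) hpos htotal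

theorem half_sum_abs_div_sum_sub_inv_card_le {ι : Type*} [Fintype ι] (f : ι → ℝ) {α M : ℝ}
    (hα : 0 ≤ α) (hlower : ∀ i, α * M ≤ f i) (hupper : ∀ i, f i ≤ M) (hpos : 0 < ∑ i, f i) :
    (1 / 2) * ∑ i, |f i / ∑ j, f j - (Fintype.card ι : ℝ)⁻¹| ≤ 1 - α := by
  refine half_sum_abs_sub_inv_card_le _ ?_ _ fun i => ?_
  · rw [← sum_div, div_self hpos.ne']
  · rw [sub_sub_cancel]
    exact le_div_sum_of_bounds f hα hlower hupper hpos i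

theorem Module.Basis.card_quotient_range_nsmul_span_int {ι K V : Type*} [Fintype ι] [Ring K]
    [CharZero K] [AddCommGroup V] [Module K V] (b : Module.Basis ι K V) (q : ℕ) :
    Nat.card ((Submodule.span ℤ (Set.range b)).toAddSubgroup ⧸
      (q • AddMonoidHom.id (Submodule.span ℤ (Set.range b)).toAddSubgroup).range) =
      q ^ Fintype.card ι := by
  let bL : Module.Basis ι ℤ (Submodule.span ℤ (Set.range b)) :=
    Module.Basis.span (b.linearIndependent.restrict_scalars' ℤ)
  have : Module.Free ℤ (Submodule.span ℤ (Set.range b)) := Module.Free.of_basis bL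
  have : Module.Finite ℤ (Submodule.span ℤ (Set.range b)) := Module.Finite.of_basis bL
  rw [← AddSubgroup.index_eq_card, ← Module.finrank_eq_card_basis bL]
  exact AddSubgroup.index_range_nsmul _ q

theorem AddSubgroup.val_image_mk_eq_mk_range_nsmul {G : Type*} [AddCommGroup G]
    (L : AddSubgroup G) (q : ℕ) (v : L) :
    Subtype.val '' {y : L | (y : L ⧸ (q • AddMonoidHom.id L).range) = v} =
      (fun x => x + (v : G)) '' ((fun x => q • x) '' (L : Set G)) := by
  ext x
  simp only [Set.mem_image, Set.mem_ofPred_eq, SetLike.mem_coe, QuotientAddGroup.eq,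
    AddMonoidHom.mem_range, AddMonoidHom.nsmul_apply, AddMonoidHom.id_apply]
  constructor
  · rintro ⟨y, ⟨z, hz⟩, rfl⟩
    refine ⟨_, ⟨_, (-z).2, rfl⟩, ?_⟩
    have hz' := congrArg Subtype.val hz
    push_cast at hz' ⊢
    rw [smul_neg, hz']
    abel
  · rintro ⟨_, ⟨w, hw, rfl⟩, rfl⟩
    refine ⟨q • ⟨w, hw⟩ + v, ⟨-⟨w, hw⟩, ?_⟩, by simp⟩
    rw [smul_neg]
    abel

section GaussMass

variable {n : ℕ} {s : ℝ} {S : Set (EuclideanSpace ℝ (Fin n))}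

theorem gaussMass_pos
    (hsum : Summable fun x : S => Real.exp (-Real.pi * ‖(x : EuclideanSpace ℝ (Fin n))‖ ^ 2 / s ^ 2))
    (hS : S.Nonempty) : 0 < gaussMass s S :=
  hsum.tsum_pos (fun _ => (Real.exp_pos _).le) ⟨_, hS.some_mem⟩ (Real.exp_pos _)

theorem hasSum_gaussMass_fiber {Q : Type*} (π : S → Q)
    (hsum : Summable fun x : S => Real.exp (-Real.pi * ‖(x : EuclideanSpace ℝ (Fin n))‖ ^ 2 / s ^ 2)) :
    HasSum (fun c => gaussMass s (Subtype.val '' {y | π y = c})) (gaussMass s S) := by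
  have hfiber : (fun c => gaussMass s (Subtype.val '' {y | π y = c})) = fun c =>
      ∑' y : π ⁻¹' {c}, Real.exp (-Real.pi * ‖((y : S) : EuclideanSpace ℝ (Fin n))‖ ^ 2 / s ^ 2) :=
    funext fun c => tsum_image (fun x : EuclideanSpace ℝ (Fin n) => Real.exp (-Real.pi * ‖x‖ ^ 2 / s ^ 2))
      Subtype.val_injective.injOn
  rw [hfiber]
  exact hsum.hasSum.tsum_fiberwise π

end GaussMass

theorem stmt0_general {n : ℕ}
    (b : Module.Basis (Fin n) ℝ (EuclideanSpace ℝ (Fin n)))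
    (L : AddSubgroup (EuclideanSpace ℝ (Fin n)))
    (hL : L = (Submodule.span ℤ (Set.range ⇑b)).toAddSubgroup)
    (q : ℕ) (hq : 1 ≤ q) (s : ℝ) (ε : ℝ) (hε : ε ∈ Set.Ioo (0 : ℝ) 1)
    (hsum : Summable fun x : L =>
      Real.exp (-Real.pi * ‖(x : EuclideanSpace ℝ (Fin n))‖ ^ 2 / s ^ 2))
    (hcoset : ∀ v : L,
      ((1 - ε) / (1 + ε)) *
          gaussMass s ((fun x => q • x) '' (L : Set (EuclideanSpace ℝ (Fin n))))
        ≤ gaussMass s ((fun x => x + (v : EuclideanSpace ℝ (Fin n))) ''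
            ((fun x => q • x) '' (L : Set (EuclideanSpace ℝ (Fin n))))) ∧
      gaussMass s ((fun x => x + (v : EuclideanSpace ℝ (Fin n))) ''
            ((fun x => q • x) '' (L : Set (EuclideanSpace ℝ (Fin n)))))
        ≤ gaussMass s ((fun x => q • x) '' (L : Set (EuclideanSpace ℝ (Fin n))))) :
    Nat.card (L ⧸ (q • AddMonoidHom.id L).range) = q ^ n ∧
    (1 / 2 : ℝ) * ∑' c : L ⧸ (q • AddMonoidHom.id L).range,
        |gaussMass s (Subtype.val ''
              {y : L | (QuotientAddGroup.mk y : L ⧸ (q • AddMonoidHom.id L).range) = c}) /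
            gaussMass s (L : Set (EuclideanSpace ℝ (Fin n))) - ((q : ℝ) ^ n)⁻¹|
      ≤ 2 * ε / (1 + ε) := by
  obtain ⟨hε0, hε1⟩ := hε
  set Q := L ⧸ (q • AddMonoidHom.id L).range
  have hcard : Nat.card Q = q ^ n := by
    subst hL
    simpa using b.card_quotient_range_nsmul_span_int q
  refine ⟨hcard, ?_⟩
  have : Finite Q := Nat.finite_of_card_ne_zero (by rw [hcard]; exact pow_ne_zero _ (by omega))
  let : Fintype Q := Fintype.ofFinite Q
  set f : Q → ℝ := fun c => gaussMass s (Subtype.val '' {y : L | (y : Q) = c})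
  have htotal : ∑ c, f c = gaussMass s (L : Set (EuclideanSpace ℝ (Fin n))) :=
    (hasSum_fintype f).unique (hasSum_gaussMass_fiber _ hsum)
  set M := gaussMass s ((fun x => q • x) '' (L : Set (EuclideanSpace ℝ (Fin n))))
  have hbounds : ∀ c, (1 - ε) / (1 + ε) * M ≤ f c ∧ f c ≤ M := by
    intro c
    obtain ⟨v, rfl⟩ := QuotientAddGroup.mk_surjective c
    simp only [f]
    rw [AddSubgroup.val_image_mk_eq_mk_range_nsmul]
    exact hcoset v
  have hqn : ((q : ℝ) ^ n) = Fintype.card Q := by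
    rw [← Nat.card_eq_fintype_card, hcard]; push_cast; rfl
  rw [tsum_fintype, ← htotal, hqn]
  calc _ ≤ 1 - (1 - ε) / (1 + ε) :=
        half_sum_abs_div_sum_sub_inv_card_le f (div_nonneg (by linarith) (by linarith))
          (fun c => (hbounds c).1) (fun c => (hbounds c).2)
          (htotal ▸ gaussMass_pos hsum ⟨0, L.zero_mem⟩)
    _ = 2 * ε / (1 + ε) := by field_simp; ring

theorem stmt0 {n : ℕ} (hn : 1 ≤ n)
    (b : Module.Basis (Fin n) ℝ (EuclideanSpace ℝ (Fin n)))
    (L : AddSubgroup (EuclideanSpace ℝ (Fin n)))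
    (hL : L = (Submodule.span ℤ (Set.range ⇑b)).toAddSubgroup)
    (q : ℕ) (hq : 1 ≤ q) (s : ℝ) (hs : 0 < s) (ε : ℝ) (hε : ε ∈ Set.Ioo (0 : ℝ) 1)
    (hsum : Summable fun x : L =>
      Real.exp (-Real.pi * ‖(x : EuclideanSpace ℝ (Fin n))‖ ^ 2 / s ^ 2))
    (hcoset : ∀ v : L,
      ((1 - ε) / (1 + ε)) *
          gaussMass s ((fun x => q • x) '' (L : Set (EuclideanSpace ℝ (Fin n))))
        ≤ gaussMass s ((fun x => x + (v : EuclideanSpace ℝ (Fin n))) ''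
            ((fun x => q • x) '' (L : Set (EuclideanSpace ℝ (Fin n))))) ∧
      gaussMass s ((fun x => x + (v : EuclideanSpace ℝ (Fin n))) ''
            ((fun x => q • x) '' (L : Set (EuclideanSpace ℝ (Fin n)))))
        ≤ gaussMass s ((fun x => q • x) '' (L : Set (EuclideanSpace ℝ (Fin n))))) :
    Nat.card (L ⧸ (q • AddMonoidHom.id L).range) = q ^ n ∧
    (1 / 2 : ℝ) * ∑' c : L ⧸ (q • AddMonoidHom.id L).range,
        |gaussMass s (Subtype.val ''
              {y : L | (QuotientAddGroup.mk y : L ⧸ (q • AddMonoidHom.id L).range) = c}) /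
            gaussMass s (L : Set (EuclideanSpace ℝ (Fin n))) - ((q : ℝ) ^ n)⁻¹|
      ≤ 2 * ε / (1 + ε) :=
  stmt0_general b L hL q hq s ε hε hsum hcoset
end

section
/- Let G be a finite abelian group, f ≥ 1 an integer, and 𝒴 a nonempty subset of {0,1}^f. For x ∈ G^f and y ∈ {0,1}^f define ⟨x,y⟩ = Σ_{i : y_i = 1} x_i ∈ G. Then the statistical distance between the joint distribution of (⟨X,Y⟩, X) and that of (U, X) — where X is uniform on G^f, Y is uniform on 𝒴 independent of X, and U is uniform on G independent of X — is at most (1/2)·√(|G|/|𝒴|); explicitly, (1/2)·Σ_{x ∈ G^f} Σ_{z ∈ G} | |G|^{−f} · (|{y ∈ 𝒴 : ⟨x,y⟩ = z}| / |𝒴|) − |G|^{−f}·|G|^{−1} | ≤ (1/2)·√(|G|/|𝒴|). -/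
/-!
By Cauchy–Schwarz, the squared `L¹` distance of a distribution `p` on a finite set `E` from the
uniform one is at most `|E| · ∑ p² - 1`, so it suffices to bound the collision count
`∑_{x,z} c(x,z)²`, where `c(x,z) = #{y ∈ 𝒴 | ⟨x,y⟩ = z}`. It counts the triples `(x, y, y')`
with `⟨x,y⟩ = ⟨x,y'⟩`; for `y ≠ y'` the map `x ↦ ⟨x,y⟩ - ⟨x,y'⟩` is a surjective homomorphism
`G^f → G`, so exactly a `1/|G|` fraction of the `x` collide. Hence
`∑ c² ≤ |𝒴| |G|^f + |𝒴|² |G|^(f-1)`, which gives the bound `|G| / |𝒴|` for the squared `L¹`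
distance.
-/

open Finset

theorem AddMonoidHom.card_ker_mul_card_of_surjective {A B : Type*} [AddGroup A] [AddGroup B]
    (φ : A →+ B) (hφ : Function.Surjective φ) : Nat.card φ.ker * Nat.card B = Nat.card A := by
  rw [← φ.ker.card_mul_index, AddSubgroup.index_ker, φ.range_eq_top_of_surjective hφ,
    AddSubgroup.card_top]

theorem Finset.sum_sq_card_filter_eq {β γ : Type*} [Fintype γ] [DecidableEq γ] (s : Finset β)
    (g : β → γ) :
    ∑ z, #{y ∈ s | g y = z} ^ 2 = ∑ y ∈ s, ∑ y' ∈ s, if g y = g y' then 1 else 0 := by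
  simp_rw [sq, card_filter, sum_mul_sum]
  rw [sum_comm]
  refine sum_congr rfl fun y _ => ?_
  rw [sum_comm]
  simp

theorem sq_sum_abs_sub_inv_card_le {E : Type*} [Fintype E] (p : E → ℝ) (hp : ∑ z, p z = 1) :
    (∑ z, |p z - (Fintype.card E : ℝ)⁻¹|) ^ 2 ≤ Fintype.card E * ∑ z, p z ^ 2 - 1 := by
  have hE : (Fintype.card E : ℝ) ≠ 0 := by
    rintro h
    simp [Fintype.card_eq_zero_iff.mp (by exact_mod_cast h)] at hp
  calc (∑ z, |p z - (Fintype.card E : ℝ)⁻¹|) ^ 2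
      ≤ Fintype.card E * ∑ z, |p z - (Fintype.card E : ℝ)⁻¹| ^ 2 := sq_sum_le_card_mul_sum_sq
    _ = Fintype.card E * ∑ z, p z ^ 2 - 1 := by
      simp only [sq_abs, sub_sq, sum_add_distrib, sum_sub_distrib, ← sum_mul, ← mul_sum, hp,
        sum_const, card_univ, nsmul_eq_mul]
      field_simp
      ring

section
variable {ι G : Type*} [Fintype ι] [AddCommGroup G]

def maskSum (y : ι → Bool) : (ι → G) →+ G :=
  AddMonoidHom.mk' (fun x => ∑ i, if y i then x i else 0) fun a b => by
    simp only [Pi.add_apply, ← sum_add_distrib, ite_add_zero]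

theorem maskSum_apply (y : ι → Bool) (x : ι → G) :
    maskSum y x = ∑ i, if y i then x i else 0 := rfl

variable [DecidableEq ι]

theorem maskSum_single (y : ι → Bool) (j : ι) (g : G) :
    maskSum y (Pi.single j g) = if y j then g else 0 := by
  rw [maskSum_apply, sum_eq_single j (fun i _ hij => by simp [hij]) (by simp)]
  simp

theorem maskSum_sub_surjective {y y' : ι → Bool} (h : y ≠ y') :
    Function.Surjective (maskSum y - maskSum y' : (ι → G) →+ G) := by
  obtain ⟨j, hj⟩ := Function.ne_iff.mp h
  intro g
  cases hy : y j <;> cases hy' : y' j <;> simp only [hy, hy', ne_eq, not_true_eq_false] at hj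
  · exact ⟨Pi.single j (-g), by simp [maskSum_single, hy, hy']⟩
  · exact ⟨Pi.single j g, by simp [maskSum_single, hy, hy']⟩

variable [Fintype G] [DecidableEq G]

theorem card_maskSum_eq_maskSum_mul_card {y y' : ι → Bool} (h : y ≠ y') :
    #{x : ι → G | maskSum y x = maskSum y' x} * Fintype.card G
      = Fintype.card G ^ Fintype.card ι := by
  have hker : #{x : ι → G | maskSum y x = maskSum y' x}
      = Nat.card (maskSum y - maskSum y' : (ι → G) →+ G).ker := by
    rw [Nat.card_eq_fintype_card, Fintype.card_subtype]
    simp [sub_eq_zero]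
  rw [hker, ← Nat.card_eq_fintype_card (α := G),
    AddMonoidHom.card_ker_mul_card_of_surjective _ (maskSum_sub_surjective h),
    Nat.card_eq_fintype_card, Fintype.card_fun, Nat.card_eq_fintype_card]

theorem sum_sum_sq_card_maskSum_le (Y : Finset (ι → Bool)) :
    ∑ x : ι → G, ∑ z, (#{y ∈ Y | maskSum y x = z} : ℝ) ^ 2
      ≤ #Y * (Fintype.card G : ℝ) ^ Fintype.card ι
        + #Y ^ 2 * (Fintype.card G : ℝ) ^ Fintype.card ι / Fintype.card G := by
  set N : ℝ := (Fintype.card G : ℝ)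
  have hN : 0 < N := by positivity
  have hpair : ∀ y y' : ι → Bool, (#{x : ι → G | maskSum y x = maskSum y' x} : ℝ)
      ≤ (if y = y' then N ^ Fintype.card ι else 0) + N ^ Fintype.card ι / N := by
    intro y y'
    by_cases h : y = y'
    · subst h
      rw [if_pos rfl, filter_true_of_mem fun _ _ => rfl, card_univ, Fintype.card_fun]
      push_cast
      exact le_add_of_nonneg_right (by positivity)
    · rw [if_neg h, zero_add, le_div_iff₀ hN]
      simp only [N]
      exact_mod_cast (card_maskSum_eq_maskSum_mul_card (G := G) h).le
  have hcollide : ∑ x : ι → G, ∑ z, #{y ∈ Y | maskSum y x = z} ^ 2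
      = ∑ y ∈ Y, ∑ y' ∈ Y, #{x : ι → G | maskSum y x = maskSum y' x} := by
    simp_rw [sum_sq_card_filter_eq, card_filter]
    rw [sum_comm]
    exact sum_congr rfl fun y _ => sum_comm
  calc ∑ x : ι → G, ∑ z, (#{y ∈ Y | maskSum y x = z} : ℝ) ^ 2
      = ∑ y ∈ Y, ∑ y' ∈ Y, (#{x : ι → G | maskSum y x = maskSum y' x} : ℝ) := by
        exact_mod_cast hcollide
    _ ≤ ∑ y ∈ Y, ∑ y' ∈ Y, ((if y = y' then N ^ Fintype.card ι else 0) + N ^ Fintype.card ι / N) :=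
        sum_le_sum fun y _ => sum_le_sum fun y' _ => hpair y y'
    _ = #Y * N ^ Fintype.card ι + #Y ^ 2 * N ^ Fintype.card ι / N := by
        simp_rw [sum_add_distrib, sum_ite_eq, sum_const, nsmul_eq_mul]
        rw [sum_ite_mem, inter_self, sum_const, nsmul_eq_mul]
        ring

theorem sum_sum_card_maskSum_div_eq_one {Y : Finset (ι → Bool)} (hY : Y.Nonempty) :
    ∑ x : ι → G, ∑ z, (#{y ∈ Y | maskSum y x = z} : ℝ)
      / ((Fintype.card G : ℝ) ^ Fintype.card ι * #Y) = 1 := by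
  have hrow : ∀ x : ι → G, ∑ z, (#{y ∈ Y | maskSum y x = z} : ℝ) = #Y := fun x => by
    exact_mod_cast (card_eq_sum_card_fiberwise fun y _ => mem_univ (maskSum y x)).symm
  have hY' : (#Y : ℝ) ≠ 0 := by simpa using hY.ne_empty
  simp_rw [← sum_div, hrow, sum_const, card_univ, Fintype.card_fun, nsmul_eq_mul]
  field_simp
  push_cast
  ring

theorem card_mul_sum_sq_card_maskSum_div_le {Y : Finset (ι → Bool)} (hY : Y.Nonempty) :
    (Fintype.card G : ℝ) ^ Fintype.card ι * Fintype.card G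
        * ∑ x : ι → G, ∑ z, ((#{y ∈ Y | maskSum y x = z} : ℝ)
          / ((Fintype.card G : ℝ) ^ Fintype.card ι * #Y)) ^ 2 - 1
      ≤ Fintype.card G / #Y := by
  set N : ℝ := (Fintype.card G : ℝ)
  set m : ℝ := (#Y : ℝ)
  set k := Fintype.card ι
  have hN : 0 < N := by positivity
  have hm : 0 < m := by simpa [m] using hY.card_pos
  simp_rw [div_pow, ← sum_div]
  calc N ^ k * N * ((∑ x : ι → G, ∑ z, (#{y ∈ Y | maskSum y x = z} : ℝ) ^ 2) / (N ^ k * m) ^ 2) - 1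
      ≤ N ^ k * N * ((m * N ^ k + m ^ 2 * N ^ k / N) / (N ^ k * m) ^ 2) - 1 := by
        gcongr
        exact sum_sum_sq_card_maskSum_le Y
    _ = N / m := by field_simp; ring

end

theorem stmt1_general (G : Type*) [AddCommGroup G] [Fintype G] [DecidableEq G]
    (f : ℕ) (Y : Finset (Fin f → Bool)) (hY : Y.Nonempty) :
    (1 / 2 : ℝ) * ∑ x : Fin f → G, ∑ z : G,
        |((Fintype.card G : ℝ))⁻¹ ^ f *
            (((Y.filter fun y => (∑ i, if y i then x i else 0) = z).card : ℝ) / (Y.card : ℝ)) -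
          ((Fintype.card G : ℝ))⁻¹ ^ f * (Fintype.card G : ℝ)⁻¹|
      ≤ (1 / 2) * Real.sqrt ((Fintype.card G : ℝ) / (Y.card : ℝ)) := by
  let p : (Fin f → G) × G → ℝ := fun xz =>
    #{y ∈ Y | maskSum y xz.1 = xz.2} / ((Fintype.card G : ℝ) ^ Fintype.card (Fin f) * #Y)
  have hcard : (Fintype.card ((Fin f → G) × G) : ℝ)
      = (Fintype.card G : ℝ) ^ Fintype.card (Fin f) * Fintype.card G := by simp
  have hp : ∑ xz, p xz = 1 := by
    rw [Fintype.sum_prod_type]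
    exact sum_sum_card_maskSum_div_eq_one hY
  have hsq : Fintype.card ((Fin f → G) × G) * ∑ xz, p xz ^ 2 - 1 ≤ Fintype.card G / #Y := by
    rw [hcard, Fintype.sum_prod_type]
    exact card_mul_sum_sq_card_maskSum_div_le hY
  have hdist : ∑ x : Fin f → G, ∑ z : G, |((Fintype.card G : ℝ))⁻¹ ^ f *
        (#{y ∈ Y | maskSum y x = z} / #Y) - ((Fintype.card G : ℝ))⁻¹ ^ f * (Fintype.card G : ℝ)⁻¹|
      = ∑ xz, |p xz - (Fintype.card ((Fin f → G) × G) : ℝ)⁻¹| := by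
    rw [Fintype.sum_prod_type, hcard]
    refine sum_congr rfl fun x _ => sum_congr rfl fun z _ => ?_
    simp only [p, Fintype.card_fin]
    congr 1
    ring
  refine (congrArg (1 / 2 * ·) hdist).trans_le ?_
  gcongr
  exact Real.le_sqrt_of_sq_le ((sq_sum_abs_sub_inv_card_le p hp).trans hsq)

theorem stmt1 (G : Type*) [AddCommGroup G] [Fintype G] [DecidableEq G]
    (f : ℕ) (hf : 1 ≤ f) (Y : Finset (Fin f → Bool)) (hY : Y.Nonempty) :
    (1 / 2 : ℝ) * ∑ x : Fin f → G, ∑ z : G,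
        |((Fintype.card G : ℝ))⁻¹ ^ f *
            (((Y.filter fun y => (∑ i, if y i then x i else 0) = z).card : ℝ) / (Y.card : ℝ)) -
          ((Fintype.card G : ℝ))⁻¹ ^ f * (Fintype.card G : ℝ)⁻¹|
      ≤ (1 / 2) * Real.sqrt ((Fintype.card G : ℝ) / (Y.card : ℝ)) :=
  stmt1_general G f Y hY
end

section
/- Let d ≥ 1 and K ≥ 1 be integers, let i be an integer with 0 ≤ i < K, and set N' = 80·d²·K and M = N' − 8·i·d. Then binom(N', 8d) / binom(M, 8d) < 5/2; equivalently, 2·binom(N', 8d) < 5·binom(M, 8d). -/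
/-!
Writing both binomials as descending factorials, each factor of `binom(N', 8d)` exceeds the
matching factor of `binom(M, 8d)` by a ratio at most `10d / (10d - 1)`, because
`N' - M = 8id ≤ 8(K-1)d` is small compared to `M`. Hence the quotient is at most
`(1 + 1/(10d-1))^{8d} ≤ exp (8d / (10d-1)) ≤ exp (8/9) < 5/2`.
-/

open Finset

namespace Nat

theorem descFactorial_mul_pow_le_descFactorial_mul_succ_pow {n m k a : ℕ} (hmn : m ≤ n)
    (h : (n - m) * a + k ≤ m + 1) :
    n.descFactorial k * a ^ k ≤ m.descFactorial k * (a + 1) ^ k := by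
  have factor_le : ∀ j ∈ range k, (n - j) * a ≤ (m - j) * (a + 1) := by
    intro j hj
    have hj : j < k := mem_range.mp hj
    obtain ⟨e, rfl⟩ := Nat.exists_eq_add_of_le hmn
    have hsplit : m + e - j = e + (m - j) := by omega
    have he : e * a ≤ m - j := by rw [Nat.add_sub_cancel_left] at h; omega
    rw [hsplit]
    nlinarith
  simpa only [descFactorial_eq_prod_range, prod_mul_distrib, prod_const, card_range]
    using prod_le_prod' factor_le

theorem choose_mul_pow_le_choose_mul_succ_pow {n m k a : ℕ} (hmn : m ≤ n)
    (h : (n - m) * a + k ≤ m + 1) :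
    n.choose k * a ^ k ≤ m.choose k * (a + 1) ^ k := by
  have hdesc := descFactorial_mul_pow_le_descFactorial_mul_succ_pow hmn h
  rw [descFactorial_eq_factorial_mul_choose, descFactorial_eq_factorial_mul_choose,
    mul_assoc, mul_assoc] at hdesc
  exact Nat.le_of_mul_le_mul_left hdesc (factorial_pos k)

end Nat

namespace Real

theorem exp_eight_div_nine_lt : exp (8 / 9) < 5 / 2 := by
  have hpow : exp (8 / 9) ^ 9 = exp 1 ^ 8 := by
    rw [← exp_nat_mul, ← exp_nat_mul]; norm_num
  have he : exp 1 ^ 8 < (5 / 2 : ℝ) ^ 9 :=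
    calc exp 1 ^ 8 < (2.7182818286 : ℝ) ^ 8 :=
          pow_lt_pow_left₀ exp_one_lt_d9 (exp_pos 1).le (by norm_num)
      _ < (5 / 2) ^ 9 := by norm_num
  exact lt_of_pow_lt_pow_left₀ 9 (by norm_num) (hpow ▸ he)

theorem one_add_inv_pow_le_exp_div (a : ℝ) (k : ℕ) (ha : 0 < a) :
    (1 + a⁻¹) ^ k ≤ exp (k / a) := by
  rw [div_eq_mul_inv, exp_nat_mul]
  exact pow_le_pow_left₀ (by positivity) (by linarith [add_one_le_exp a⁻¹]) k

end Real

theorem Nat.two_mul_succ_pow_lt_five_mul_pow {a k : ℕ} (h : 9 * k ≤ 8 * a) :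
    2 * (a + 1) ^ k < 5 * a ^ k := by
  rcases Nat.eq_zero_or_pos a with rfl | ha
  · obtain rfl : k = 0 := by omega
    norm_num
  have ha' : (0 : ℝ) < a := by exact_mod_cast ha
  have hratio : (1 + (a : ℝ)⁻¹) ^ k < 5 / 2 :=
    calc (1 + (a : ℝ)⁻¹) ^ k ≤ Real.exp (k / a) := Real.one_add_inv_pow_le_exp_div a k ha'
      _ ≤ Real.exp (8 / 9) := by
          rw [Real.exp_le_exp, div_le_div_iff₀ ha' (by norm_num)]
          exact_mod_cast (by omega : k * 9 ≤ 8 * a)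
      _ < 5 / 2 := Real.exp_eight_div_nine_lt
  have hsplit : ((a : ℝ) + 1) ^ k = a ^ k * (1 + (a : ℝ)⁻¹) ^ k := by
    rw [← mul_pow]; congr 1; field_simp
  have hreal : 2 * ((a : ℝ) + 1) ^ k < 5 * (a : ℝ) ^ k := by
    rw [hsplit]; nlinarith [pow_pos ha' k]
  exact_mod_cast hreal

theorem stmt3_general (d K i : ℕ) (hd : 1 ≤ d) (hi : i < K) :
    2 * (80 * d ^ 2 * K).choose (8 * d) < 5 * (80 * d ^ 2 * K - 8 * i * d).choose (8 * d) := by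
  set n := 80 * d ^ 2 * K
  set m := n - 8 * i * d
  set a := 10 * d - 1
  have ha : a + 1 = 10 * d := by omega
  have hgap : 80 * i * d ^ 2 + 8 * d ≤ n := by
    have : 80 * d ^ 2 * (i + 1) ≤ n := Nat.mul_le_mul_left _ hi
    nlinarith
  have hnm : n - m = 8 * i * d := Nat.sub_sub_self (by nlinarith)
  have hfactor : (n - m) * a + 8 * d ≤ m := by
    have hsucc : 8 * i * d * a + 8 * i * d = 80 * i * d ^ 2 := by
      rw [← mul_add_one, ha]; ring
    rw [hnm]
    omega
  have hchoose :=
    Nat.choose_mul_pow_le_choose_mul_succ_pow (Nat.sub_le n _) (Nat.le_succ_of_le hfactor)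
  have hpow : 2 * (a + 1) ^ (8 * d) < 5 * a ^ (8 * d) :=
    Nat.two_mul_succ_pow_lt_five_mul_pow (by omega)
  have hm : 0 < m.choose (8 * d) := Nat.choose_pos (by omega)
  refine Nat.lt_of_mul_lt_mul_right (a := a ^ (8 * d)) ?_
  calc 2 * n.choose (8 * d) * a ^ (8 * d) ≤ m.choose (8 * d) * (2 * (a + 1) ^ (8 * d)) := by
        linarith
    _ < m.choose (8 * d) * (5 * a ^ (8 * d)) := Nat.mul_lt_mul_of_pos_left hpow hm
    _ = 5 * m.choose (8 * d) * a ^ (8 * d) := by ring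

theorem stmt3 (d K i : ℕ) (hd : 1 ≤ d) (hK : 1 ≤ K) (hi : i < K) :
    2 * (80 * d ^ 2 * K).choose (8 * d) < 5 * (80 * d ^ 2 * K - 8 * i * d).choose (8 * d) :=
  stmt3_general d K i hd hi
end
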